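/- Let P be a zigzag poset with extrema {z_i | i ∈ ℕ} and associated total order ⊑, and let V be a pointwise finite dimensional persistence module indexed by P. Assume that for every n ∈ ℕ, for every interval decomposition V(n) = ⊕_{U ∈ A} U of the restriction V(n), and for every U ∈ A, we have U_{z_0} ≠ 0 or U_{z_n} ≠ 0. Then there exists m ∈ ℕ such that V is monotonic after z_m. -/

import Mathlib

universe u v w w'

/-- A persistence module indexed by a poset `P`, over a field `k`. -/
structure PersMod (k : Type u) [Field k] (P : Type v) [PartialOrder P] :
    Type (max u v (w + 1)) where
  space : P → Type w
  [acg : ∀ x, AddCommGroup (space x)]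
  [mod : ∀ x, Module k (space x)]
  map : ∀ {x y : P}, x ≤ y → (space x →ₗ[k] space y)
  map_id : ∀ x : P, map (le_refl x) = LinearMap.id
  map_comp : ∀ {x y z : P} (hxy : x ≤ y) (hyz : y ≤ z),
    (map hyz).comp (map hxy) = map (hxy.trans hyz)

attribute [instance] PersMod.acg PersMod.mod

variable (k : Type u) [Field k] {P : Type v} [PartialOrder P]

/-- A morphism of persistence modules (a natural transformation). -/
structure PersHom (V : PersMod.{u, v, w} k P) (W : PersMod.{u, v, w'} k P) where
  app : ∀ x : P, V.space x →ₗ[k] W.space x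
  natural : ∀ {x y : P} (h : x ≤ y) (v : V.space x),
    app y (V.map h v) = W.map h (app x v)

/-- An isomorphism of persistence modules. -/
structure PersIso (V : PersMod.{u, v, w} k P) (W : PersMod.{u, v, w'} k P) where
  app : ∀ x : P, V.space x ≃ₗ[k] W.space x
  natural : ∀ {x y : P} (h : x ≤ y) (v : V.space x),
    app y (V.map h v) = W.map h (app x v)

/-- A subset `I` of a poset is convex if `x ≤ y ≤ z`, `x ∈ I`, `z ∈ I` imply `y ∈ I`. -/
def IsConvexIn (I : Set P) : Prop :=
  ∀ ⦃x y z : P⦄, x ∈ I → z ∈ I → x ≤ y → y ≤ z → y ∈ I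

/-- A subset `I` of a poset is connected if any two points of `I` are joined by a
zigzag path inside `I`. -/
def IsConnectedIn (I : Set P) : Prop :=
  ∀ x ∈ I, ∀ z ∈ I, ∃ (n : ℕ) (c : ℕ → P), (∀ i ≤ n, c i ∈ I) ∧ c 0 = x ∧ c n = z ∧
    ∀ i < n, c i ≤ c (i + 1) ∨ c (i + 1) ≤ c i

/-- An interval in a poset: nonempty, convex and connected. -/
def IsPosetInterval (I : Set P) : Prop :=
  I.Nonempty ∧ IsConvexIn I ∧ IsConnectedIn I

open Classical in
/-- The subspace of `k` used as the value of the constant module at `x`. -/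
noncomputable def constSub (I : Set P) (x : P) : Submodule k k :=
  if x ∈ I then ⊤ else ⊥

open Classical in
/-- The structure map of the constant module. -/
noncomputable def constMap (I : Set P) (x y : P) :
    constSub k I x →ₗ[k] constSub k I y :=
  LinearMap.codRestrict (constSub k I y)
    ((if y ∈ I then (LinearMap.id : k →ₗ[k] k) else 0).comp (constSub k I x).subtype)
    (fun c => by
      by_cases hy : y ∈ I
      · simp [constSub, hy]
      · have h0 : ((if y ∈ I then (LinearMap.id : k →ₗ[k] k) else 0).comp
            (constSub k I x).subtype) c = 0 := by
          rw [if_neg hy]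
          rfl
        rw [h0]
        exact Submodule.zero_mem _)

open Classical in
/-- The constant (interval) module `M(I)` attached to a convex subset `I`. -/
noncomputable def constMod (I : Set P) (hI : IsConvexIn I) : PersMod.{u, v, u} k P where
  space x := constSub k I x
  map {x y} _ := constMap k I x y
  map_id := fun x => by
    ext c
    by_cases hx : x ∈ I
    · simp [constMap, hx]
    · have hc : (c : k) = 0 := by
        have hb : constSub k I x = ⊥ := if_neg hx
        have hm : ∀ (S : Submodule k k) (d : S), S = ⊥ → (d : k) = 0 := by
            rintro S d rfl
            exact (Submodule.mem_bot k).1 d.2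
        exact hm _ c hb
      simp [constMap, hx, hc]
  map_comp := fun {x y z} hxy hyz => by
    ext c
    by_cases hz : z ∈ I
    · by_cases hy : y ∈ I
      · simp [constMap, hy, hz]
      · have hx : x ∉ I := fun hx => hy (hI hx hz hxy hyz)
        have hc : (c : k) = 0 := by
          have hb : constSub k I x = ⊥ := if_neg hx
          have hm : ∀ (S : Submodule k k) (d : S), S = ⊥ → (d : k) = 0 := by
            rintro S d rfl
            exact (Submodule.mem_bot k).1 d.2
          exact hm _ c hb
        simp [constMap, hy, hz, hc]
    · simp [constMap, hz]

/-- A submodule of a persistence module: a family of subspaces preserved by the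
structure maps. -/
structure PersSubmod (V : PersMod.{u, v, w} k P) where
  carrier : ∀ x : P, Submodule k (V.space x)
  mapLe : ∀ {x y : P} (h : x ≤ y), ∀ v ∈ carrier x, V.map h v ∈ carrier y

/-- A submodule of a persistence module, viewed as a persistence module in its own
right. -/
def PersSubmod.toPersMod {V : PersMod.{u, v, w} k P} (U : PersSubmod k V) :
    PersMod.{u, v, w} k P where
  space x := U.carrier x
  map {x y} h := (V.map h).restrict (U.mapLe h)
  map_id := fun x => by
    ext c
    simp [LinearMap.restrict_apply, V.map_id]
  map_comp := fun {x y z} hxy hyz => by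
    ext c
    have := LinearMap.congr_fun (V.map_comp hxy hyz) (c : V.space x)
    simpa [LinearMap.restrict_apply] using this

/-- A persistence module is an interval module if it is isomorphic to a constant
module `M(I)` for some interval `I`. -/
def IsIntervalModule (V : PersMod.{u, v, w} k P) : Prop :=
  ∃ (I : Set P) (hI : IsPosetInterval I), Nonempty (PersIso k V (constMod k I hI.2.1))

/-- `A` is an internal direct sum decomposition of `V`:
at each point the subspaces are independent and span everything. -/
def IsDecomp (V : PersMod.{u, v, w} k P) (A : Set (PersSubmod k V)) : Prop :=
  ∀ x : P, iSupIndep (fun U : A => (U : PersSubmod k V).carrier x) ∧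
    ⨆ U : A, (U : PersSubmod k V).carrier x = ⊤

/-- An interval decomposition of `V`. -/
def IsIntervalDecomp (V : PersMod.{u, v, w} k P) (A : Set (PersSubmod k V)) : Prop :=
  IsDecomp k V A ∧ ∀ U ∈ A, IsIntervalModule k U.toPersMod

/-- `V` has an interval decomposition. -/
def HasIntervalDecomp (V : PersMod.{u, v, w} k P) : Prop :=
  ∃ A : Set (PersSubmod k V), IsIntervalDecomp k V A

/-- `P` is a zigzag poset with extrema `z i` (`i ∈ Γ ⊆ ℤ`) and associated total
order `sq` (`⊑`): `sq` is a total order on the underlying set of `P` such that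
(1) `i < j` in `Γ` implies `z i ⊏ z j`; (2) any pair `x ≤ y` in `P` lies between two
consecutive extrema with respect to `⊑`; (3) between consecutive extrema, the partial
order of `P` agrees with `⊑` or with its reverse, alternating with the parity of the
index. -/
def IsZigzagWith {P : Type v} [PartialOrder P] (Γ : Set ℤ) (z : ℤ → P)
    (sq : P → P → Prop) : Prop :=
  IsLinearOrder P sq ∧
  (∀ i ∈ Γ, ∀ j ∈ Γ, i < j → sq (z i) (z j) ∧ z i ≠ z j) ∧
  (∀ x y : P, x ≤ y → ∃ i : ℤ, i ∈ Γ ∧ i + 1 ∈ Γ ∧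
    sq (z i) x ∧ sq x (z (i + 1)) ∧ sq (z i) y ∧ sq y (z (i + 1))) ∧
  ((∀ i : ℤ, i ∈ Γ → i + 1 ∈ Γ → ∀ x y : P,
      sq (z i) x → sq x y → sq y (z (i + 1)) →
      (Odd i → x ≤ y) ∧ (Even i → y ≤ x)) ∨
   (∀ i : ℤ, i ∈ Γ → i + 1 ∈ Γ → ∀ x y : P,
      sq (z i) x → sq x y → sq y (z (i + 1)) →
      (Odd i → y ≤ x) ∧ (Even i → x ≤ y)))

/-- `P` is a zigzag poset with extrema `z i`, `i ∈ Γ`. -/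
def IsZigzag {P : Type v} [PartialOrder P] (Γ : Set ℤ) (z : ℤ → P) : Prop :=
  ∃ sq : P → P → Prop, IsZigzagWith Γ z sq

/-- The restriction of a persistence module to a full subposet. -/
def restrictMod {P : Type v} [PartialOrder P] (V : PersMod.{u, v, w} k P)
    (S : Set P) : PersMod.{u, v, w} k S where
  space x := V.space x.1
  map {_ _} h := V.map (Subtype.coe_le_coe.mpr h)
  map_id := fun x => V.map_id x.1
  map_comp := fun h1 h2 => V.map_comp (Subtype.coe_le_coe.mpr h1) (Subtype.coe_le_coe.mpr h2)

/-- The segment `P(n) = {x ∈ P | z 0 ⊑ x ⊑ z n}` of a zigzag poset. -/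
def zigzagSeg {P : Type v} (z : ℤ → P) (sq : P → P → Prop) (n : ℤ) : Set P :=
  {x : P | sq (z 0) x ∧ sq x (z n)}

/-- `V` is monotonic after `z m`: for every `n ≥ m`, every interval decomposition of
the restriction `V(n)` of `V` to `P(n)`, and every summand `U` vanishing at `z n`,
the summand `U` vanishes at every point `x` with `z m ⊑ x ⊑ z n`. -/
def MonotonicAfter {P : Type v} [PartialOrder P] (z : ℤ → P) (sq : P → P → Prop)
    (V : PersMod.{u, v, w} k P) (m : ℤ) : Prop :=
  ∀ n : ℤ, m ≤ n →
    ∀ A : Set (PersSubmod k (restrictMod k V (zigzagSeg z sq n))),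
      IsIntervalDecomp k (restrictMod k V (zigzagSeg z sq n)) A →
      ∀ U ∈ A, (∀ p : ↥(zigzagSeg z sq n), p.1 = z n → U.carrier p = ⊥) →
        ∀ p : ↥(zigzagSeg z sq n), sq (z m) p.1 → U.carrier p = ⊥


/-! For a path `x 0, …, x n` in a poset, the rank of the canonical map from the limit to the
colimit of a persistence module over the path counts, in any interval decomposition, the summands
supported on the whole path. Along the extrema of the zigzag this gives a function `ρ n`
independent of the decomposition; let `m` minimise it. In a decomposition of `V(N)`, `N ≥ m`,
the summands supported on `z 0, …, z N` are among those supported on `z 0, …, z m`, and there are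
`ρ N ≥ ρ m` of them, so the two families coincide. A summand vanishing at `z N` but not at some
`x ⊒ z m` is nonzero at `z 0` by hypothesis, hence, intervals being convex for `⊑`, supported on
`z 0, …, z m`, hence also nonzero at `z N`: a contradiction. -/

namespace IsZigzagWith

variable {Γ : Set ℤ} {z : ℤ → P} {sq : P → P → Prop}

theorem sq_imp_le_or_sq_imp_ge (hzz : IsZigzagWith Γ z sq) {i : ℤ} (hi : i ∈ Γ)
    (hi' : i + 1 ∈ Γ) :
    (∀ x y, sq (z i) x → sq x y → sq y (z (i + 1)) → x ≤ y) ∨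
      (∀ x y, sq (z i) x → sq x y → sq y (z (i + 1)) → y ≤ x) := by
  rcases hzz.2.2.2 with h | h <;> rcases Int.even_or_odd i with hp | hp
  · exact Or.inr fun x y h₁ h₂ h₃ => (h i hi hi' x y h₁ h₂ h₃).2 hp
  · exact Or.inl fun x y h₁ h₂ h₃ => (h i hi hi' x y h₁ h₂ h₃).1 hp
  · exact Or.inl fun x y h₁ h₂ h₃ => (h i hi hi' x y h₁ h₂ h₃).2 hp
  · exact Or.inr fun x y h₁ h₂ h₃ => (h i hi hi' x y h₁ h₂ h₃).1 hp

theorem le_or_ge_succ (hzz : IsZigzagWith Γ z sq) {i : ℤ} (hi : i ∈ Γ) (hi' : i + 1 ∈ Γ) :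
    z i ≤ z (i + 1) ∨ z (i + 1) ≤ z i := by
  have := hzz.1
  have h := (hzz.2.1 i hi (i + 1) hi' (lt_add_one i)).1
  rcases hzz.sq_imp_le_or_sq_imp_ge hi hi' with hle | hge
  · exact Or.inl (hle _ _ (refl_of sq _) h (refl_of sq _))
  · exact Or.inr (hge _ _ (refl_of sq _) h (refl_of sq _))

/-- Comparable points lie in a common block, on which `≤` is `⊑` or its reverse. -/
theorem le_between_of_sq_between (hzz : IsZigzagWith Γ z sq) {c d w : P} (hcd : c ≤ d)
    (hw : sq c w ∧ sq w d ∨ sq d w ∧ sq w c) :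
    c ≤ w ∧ w ≤ d ∨ d ≤ w ∧ w ≤ c := by
  have := hzz.1
  obtain ⟨i, hi, hi', hic, hci, hid, hdi⟩ := hzz.2.2.1 c d hcd
  rcases hzz.sq_imp_le_or_sq_imp_ge hi hi' with hle | hge <;>
    rcases hw with ⟨h₁, h₂⟩ | ⟨h₁, h₂⟩
  · exact Or.inl ⟨hle c w hic h₁ (trans_of sq h₂ hdi), hle w d (trans_of sq hic h₁) h₂ hdi⟩
  · exact Or.inr ⟨hle d w hid h₁ (trans_of sq h₂ hci), hle w c (trans_of sq hid h₁) h₂ hci⟩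
  · exact Or.inr ⟨hge w d (trans_of sq hic h₁) h₂ hdi, hge c w hic h₁ (trans_of sq h₂ hdi)⟩
  · exact Or.inl ⟨hge w c (trans_of sq hid h₁) h₂ hci, hge d w hid h₁ (trans_of sq h₂ hci)⟩

/-- Walk along a zigzag path from `a` to `b` inside `I` up to the first point `⊒ w`; the step
that crosses `w` is a comparable pair. -/
theorem mem_of_sq_between (hzz : IsZigzagWith Γ z sq) {S : Set P} {I : Set S}
    (hI : IsPosetInterval I) {a b w : S} (ha : a ∈ I) (hb : b ∈ I) (haw : sq a w)
    (hwb : sq w b) : w ∈ I := by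
  classical
  have := hzz.1
  obtain ⟨t, c, hcI, rfl, rfl, hstep⟩ := hI.2.2 a ha b hb
  have hex : ∃ j, sq w (c j) := ⟨t, hwb⟩
  obtain ⟨j, hj⟩ : ∃ j, Nat.find hex = j := ⟨_, rfl⟩
  cases j with
  | zero =>
    have hw : w = c 0 := Subtype.ext (antisymm_of sq (hj ▸ Nat.find_spec hex) haw)
    exact hw ▸ ha
  | succ j =>
    have hjt : j + 1 ≤ t := hj ▸ Nat.find_min' hex hwb
    have hlo : sq (c j) w :=
      (total_of sq w (c j)).resolve_left (Nat.find_min hex (by omega))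
    have hhi : sq w (c (j + 1)) := hj ▸ Nat.find_spec hex
    have hcj := hcI j (by omega)
    have hcj' := hcI (j + 1) hjt
    rcases hstep j (by omega) with hle | hge
    · rcases hzz.le_between_of_sq_between hle (Or.inl ⟨hlo, hhi⟩) with ⟨h₁, h₂⟩ | ⟨h₁, h₂⟩
      · exact hI.2.1 hcj hcj' h₁ h₂
      · exact hI.2.1 hcj' hcj h₁ h₂
    · rcases hzz.le_between_of_sq_between hge (Or.inr ⟨hlo, hhi⟩) with ⟨h₁, h₂⟩ | ⟨h₁, h₂⟩
      · exact hI.2.1 hcj' hcj h₁ h₂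
      · exact hI.2.1 hcj hcj' h₁ h₂

theorem sq_mono (hzz : IsZigzagWith Γ z sq) {i j : ℤ} (hi : i ∈ Γ) (hj : j ∈ Γ) (hij : i ≤ j) :
    sq (z i) (z j) := by
  have := hzz.1
  rcases hij.eq_or_lt with rfl | hlt
  · exact refl_of sq _
  · exact (hzz.2.1 i hi j hj hlt).1

end IsZigzagWith

variable {k}

namespace PersIso

variable {W : PersMod.{u, v, w} k P} {U : PersSubmod k W} {I : Set P} {hI : IsConvexIn I}
  (e : PersIso k U.toPersMod (constMod k I hI))

noncomputable def coord (x : P) : U.carrier x →ₗ[k] k :=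
  (constSub k I x).subtype ∘ₗ ((e.app x).toLinearMap : U.carrier x →ₗ[k] constSub k I x)

theorem coord_apply (x : P) (v : U.carrier x) :
    e.coord x v = (constSub k I x).subtype (e.app x v) := rfl

theorem coord_injective (x : P) : Function.Injective (e.coord x) :=
  Subtype.val_injective.comp (e.app x).injective

theorem coord_map {x y : P} (h : x ≤ y) (hy : y ∈ I) (v : U.carrier x) :
    e.coord y ⟨W.map h v, U.mapLe h v v.2⟩ = e.coord x v := by
  change (constSub k I y).subtype (e.app y (U.toPersMod.map h v)) = e.coord x v
  rw [e.natural h v]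
  simp only [constMod, constMap, if_pos hy, LinearMap.id_comp, Submodule.subtype_apply,
    coord_apply]
  rfl

noncomputable def gen {x : P} (hx : x ∈ I) : U.carrier x :=
  (e.app x).symm ⟨1, by simp [constSub, hx]⟩

theorem coord_gen {x : P} (hx : x ∈ I) : e.coord x (e.gen hx) = 1 :=
  congrArg (constSub k I x).subtype ((e.app x).apply_symm_apply _)

theorem eq_coord_smul_gen {x : P} (hx : x ∈ I) (v : U.carrier x) :
    v = e.coord x v • e.gen hx :=
  e.coord_injective x (by rw [map_smul, coord_gen, smul_eq_mul, mul_one])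

theorem map_gen {x y : P} (h : x ≤ y) (hx : x ∈ I) (hy : y ∈ I) :
    W.map h (e.gen hx) = e.gen hy :=
  congrArg Subtype.val <| e.coord_injective y <|
    (e.coord_map h hy _).trans ((e.coord_gen hx).trans (e.coord_gen hy).symm)

theorem carrier_ne_bot_iff (e : PersIso k U.toPersMod (constMod k I hI)) {x : P} :
    U.carrier x ≠ ⊥ ↔ x ∈ I := by
  refine ⟨fun hU => by_contra fun hx => hU ?_, fun hx => ?_⟩
  · refine (Submodule.eq_bot_iff _).2 fun v hv => ?_
    have hcoord : e.coord x ⟨v, hv⟩ = 0 := by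
      have hbot : constSub k I x = ⊥ := if_neg hx
      exact (Submodule.mem_bot k).1 (hbot ▸ (e.app x ⟨v, hv⟩).2)
    simpa using congrArg Subtype.val (e.coord_injective x (hcoord.trans (map_zero _).symm))
  · refine (Submodule.ne_bot_iff _).2 ⟨e.gen hx, (e.gen hx).2, fun h0 => ?_⟩
    have := e.coord_gen hx
    rw [show e.gen hx = 0 from Subtype.ext h0, map_zero] at this
    exact zero_ne_one this

end PersIso

namespace IsDecomp

variable {W : PersMod.{u, v, w} k P} {A : Set (PersSubmod k W)} {U : PersSubmod k W}

theorem isCompl_iSup_ne (hA : IsDecomp k W A) (hU : U ∈ A) (x : P) :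
    IsCompl (U.carrier x) (⨆ (U' : A) (_ : U' ≠ ⟨U, hU⟩), U'.1.carrier x) :=
  ⟨(hA x).1 ⟨U, hU⟩, codisjoint_iff.2 <|
    (iSup_split_single (fun U' : A => U'.1.carrier x) ⟨U, hU⟩).symm.trans (hA x).2⟩

theorem map_mem_iSup_ne (hU : U ∈ A) {x y : P} (h : x ≤ y) {v : W.space x}
    (hv : v ∈ ⨆ (U' : A) (_ : U' ≠ ⟨U, hU⟩), U'.1.carrier x) :
    W.map h v ∈ ⨆ (U' : A) (_ : U' ≠ ⟨U, hU⟩), U'.1.carrier y := by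
  refine Submodule.mem_comap.1 ((iSup₂_le fun U' hU' => ?_ :
    _ ≤ Submodule.comap (W.map h) (⨆ (U' : A) (_ : U' ≠ ⟨U, hU⟩), U'.1.carrier y)) hv)
  exact fun u hu => le_iSup₂ (f := fun (U' : A) (_ : U' ≠ ⟨U, hU⟩) => U'.1.carrier y) U' hU'
    (U'.1.mapLe h u hu)

noncomputable def proj (hA : IsDecomp k W A) (hU : U ∈ A) (x : P) :
    W.space x →ₗ[k] U.carrier x :=
  (U.carrier x).projectionOnto _ (hA.isCompl_iSup_ne hU x)

variable (hA : IsDecomp k W A) (hU : U ∈ A)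

theorem proj_apply_of_mem {x : P} {v : W.space x} (hv : v ∈ U.carrier x) :
    hA.proj hU x v = ⟨v, hv⟩ :=
  Submodule.projectionOnto_apply_of_mem_left _ hv

theorem proj_apply_of_mem_of_ne {U' : PersSubmod k W} (hU' : U' ∈ A) (hne : U' ≠ U) {x : P}
    {v : W.space x} (hv : v ∈ U'.carrier x) : hA.proj hU x v = 0 :=
  Submodule.projectionOnto_apply_of_mem_right _ <|
    le_iSup₂ (f := fun (U'' : A) (_ : U'' ≠ ⟨U, hU⟩) => U''.1.carrier x) ⟨U', hU'⟩
      (fun h => hne (congrArg Subtype.val h)) hv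

theorem proj_map {x y : P} (h : x ≤ y) (v : W.space x) :
    (hA.proj hU y (W.map h v) : W.space y) = W.map h (hA.proj hU x v) := by
  have hv : v ∈ U.carrier x ⊔ ⨆ (U' : A) (_ : U' ≠ ⟨U, hU⟩), U'.1.carrier x :=
    (hA.isCompl_iSup_ne hU x).sup_eq_top ▸ Submodule.mem_top
  obtain ⟨a, ha, b, hb, rfl⟩ := Submodule.mem_sup.1 hv
  have hproj_b : ∀ {z : P} {c : W.space z},
      c ∈ (⨆ (U' : A) (_ : U' ≠ ⟨U, hU⟩), U'.1.carrier z) → hA.proj hU z c = 0 :=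
    fun hc => Submodule.projectionOnto_apply_of_mem_right _ hc
  rw [map_add, map_add, map_add, hproj_b hb, hproj_b (map_mem_iSup_ne hU h hb),
    hA.proj_apply_of_mem hU ha, hA.proj_apply_of_mem hU (U.mapLe h a ha)]
  simp

theorem proj_finsuppSum {x : P} (f : A →₀ W.space x) (hf : ∀ U : A, f U ∈ U.1.carrier x)
    (U : A) : hA.proj U.2 x (f.sum fun _ v => v) = ⟨f U, hf U⟩ := by
  rw [map_finsuppSum, Finsupp.sum_eq_single U]
  · exact hA.proj_apply_of_mem U.2 (hf U)
  · exact fun U' _ hne =>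
      hA.proj_apply_of_mem_of_ne U.2 U'.2 (fun h => hne (Subtype.ext h)) (hf U')
  · simp

end IsDecomp

section Path

variable (W : PersMod.{u, v, w} k P) {n : ℕ} (x : Fin (n + 1) → P)

/-- The limit of `W` over the path `x 0, …, x n`. -/
def pathSections : Submodule k (∀ i, W.space (x i)) :=
  ⨅ i : Fin n,
    (⨅ h : x i.castSucc ≤ x i.succ, LinearMap.ker
      (W.map h ∘ₗ LinearMap.proj (φ := fun i => W.space (x i)) i.castSucc -
        LinearMap.proj i.succ)) ⊓
    (⨅ h : x i.succ ≤ x i.castSucc, LinearMap.ker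
      (W.map h ∘ₗ LinearMap.proj (φ := fun i => W.space (x i)) i.succ -
        LinearMap.proj i.castSucc))

/-- The relations presenting the colimit of `W` over the path `x 0, …, x n`. -/
def pathRelations : Submodule k (∀ i, W.space (x i)) :=
  ⨆ i : Fin n,
    (⨆ h : x i.castSucc ≤ x i.succ, LinearMap.range
      (LinearMap.single k (fun i => W.space (x i)) i.castSucc -
        LinearMap.single k _ i.succ ∘ₗ W.map h)) ⊔
    (⨆ h : x i.succ ≤ x i.castSucc, LinearMap.range
      (LinearMap.single k (fun i => W.space (x i)) i.succ -
        LinearMap.single k _ i.castSucc ∘ₗ W.map h))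

noncomputable def toPathColim (i : Fin (n + 1)) :
    W.space (x i) →ₗ[k] (∀ i, W.space (x i)) ⧸ pathRelations W x :=
  (pathRelations W x).mkQ ∘ₗ LinearMap.single k (fun i => W.space (x i)) i

/-- The rank of the canonical map from the limit to the colimit of `W` over the path. -/
noncomputable def pathRank : ℕ :=
  Module.finrank k
    ((pathSections W x).map (toPathColim W x 0 ∘ₗ LinearMap.proj (φ := fun i => W.space (x i)) 0))

variable {W x}

theorem mem_pathSections {s : ∀ i, W.space (x i)} :
    s ∈ pathSections W x ↔ ∀ i : Fin n,
      (∀ h : x i.castSucc ≤ x i.succ, W.map h (s i.castSucc) = s i.succ) ∧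
      (∀ h : x i.succ ≤ x i.castSucc, W.map h (s i.succ) = s i.castSucc) := by
  simp [pathSections, sub_eq_zero]

theorem toPathColim_map_succ (i : Fin n) (h : x i.castSucc ≤ x i.succ)
    (v : W.space (x i.castSucc)) :
    toPathColim W x i.succ (W.map h v) = toPathColim W x i.castSucc v := by
  refine ((Submodule.Quotient.eq _).2 ?_).symm
  exact Submodule.mem_iSup_of_mem i <| Submodule.mem_sup_left <|
    Submodule.mem_iSup_of_mem h (LinearMap.mem_range_self _ v)

theorem toPathColim_map_castSucc (i : Fin n) (h : x i.succ ≤ x i.castSucc)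
    (v : W.space (x i.succ)) :
    toPathColim W x i.castSucc (W.map h v) = toPathColim W x i.succ v := by
  refine ((Submodule.Quotient.eq _).2 ?_).symm
  exact Submodule.mem_iSup_of_mem i <| Submodule.mem_sup_right <|
    Submodule.mem_iSup_of_mem h (LinearMap.mem_range_self _ v)

theorem toPathColim_apply_eq_of_mem_pathSections
    (hx : ∀ i : Fin n, x i.castSucc ≤ x i.succ ∨ x i.succ ≤ x i.castSucc)
    {s : ∀ i, W.space (x i)} (hs : s ∈ pathSections W x) (i : Fin (n + 1)) :
    toPathColim W x i (s i) = toPathColim W x 0 (s 0) := by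
  induction i using Fin.induction with
  | zero => rfl
  | succ i ih =>
    rw [← ih]
    rcases hx i with h | h
    · rw [← (mem_pathSections.1 hs i).1 h, toPathColim_map_succ]
    · rw [← (mem_pathSections.1 hs i).2 h, toPathColim_map_castSucc]

theorem exists_pathColim_lift {M : Type*} [AddCommGroup M] [Module k M]
    (φ : ∀ i, W.space (x i) →ₗ[k] M)
    (hφ : ∀ (i : Fin n) (h : x i.castSucc ≤ x i.succ), φ i.succ ∘ₗ W.map h = φ i.castSucc)
    (hφ' : ∀ (i : Fin n) (h : x i.succ ≤ x i.castSucc), φ i.castSucc ∘ₗ W.map h = φ i.succ) :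
    ∃ Φ : ((∀ i, W.space (x i)) ⧸ pathRelations W x) →ₗ[k] M,
      ∀ i v, Φ (toPathColim W x i v) = φ i v := by
  have hsingle : ∀ i v, (∑ j, φ j ∘ₗ LinearMap.proj j) (Pi.single i v) = φ i v := by
    intro i v
    rw [LinearMap.sum_apply, Finset.sum_eq_single i (fun j _ hj => by simp [hj]) (by simp)]
    simp
  refine ⟨(pathRelations W x).liftQ _ ?_, fun i v => hsingle i v⟩
  refine iSup_le fun i => sup_le (iSup_le fun h => ?_) (iSup_le fun h => ?_) <;>
    rintro _ ⟨v, rfl⟩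
  · simp [map_sub, hsingle, ← LinearMap.comp_apply, hφ i h]
  · simp [map_sub, hsingle, ← LinearMap.comp_apply, hφ' i h]

end Path

theorem LinearIndependent.enatCard_eq_finrank_span {K ι M : Type*} [DivisionRing K]
    [AddCommGroup M] [Module K M] {b : ι → M} (hb : LinearIndependent K b)
    [FiniteDimensional K (Submodule.span K (Set.range b))] :
    ENat.card ι = Module.finrank K (Submodule.span K (Set.range b)) := by
  have hb' : LinearIndependent K fun i => (⟨b i, Submodule.subset_span ⟨i, rfl⟩⟩ :
      Submodule.span K (Set.range b)) :=
    LinearIndependent.of_comp (Submodule.span K (Set.range b)).subtype hb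
  have := hb'.finite
  cases nonempty_fintype ι
  rw [finrank_span_eq_card hb, ENat.card_eq_coe_fintype_card]

section Counting

variable {W : PersMod.{u, v, w} k P} {n : ℕ} {x : Fin (n + 1) → P}

theorem PersIso.gen_mem_pathSections {U : PersSubmod k W} {I : Set P} {hI : IsConvexIn I}
    (e : PersIso k U.toPersMod (constMod k I hI)) (hxI : ∀ i, x i ∈ I) :
    (fun i => (e.gen (hxI i) : W.space (x i))) ∈ pathSections W x :=
  mem_pathSections.2 fun _ => ⟨fun h => e.map_gen h _ _, fun h => e.map_gen h _ _⟩

variable {A : Set (PersSubmod k W)} {U : PersSubmod k W}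

theorem IsDecomp.proj_mem_pathSections (hA : IsDecomp k W A) (hU : U ∈ A)
    {s : ∀ i, W.space (x i)} (hs : s ∈ pathSections W x) :
    (fun i => (hA.proj hU (x i) (s i) : W.space (x i))) ∈ pathSections W x := by
  refine mem_pathSections.2 fun i => ⟨fun h => ?_, fun h => ?_⟩
  · rw [← hA.proj_map hU h, (mem_pathSections.1 hs i).1 h]
  · rw [← hA.proj_map hU h, (mem_pathSections.1 hs i).2 h]

theorem IsDecomp.toPathColim_proj_eq_zero (hA : IsDecomp k W A) (hU : U ∈ A)
    (hx : ∀ i : Fin n, x i.castSucc ≤ x i.succ ∨ x i.succ ≤ x i.castSucc)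
    {s : ∀ i, W.space (x i)} (hs : s ∈ pathSections W x) {i : Fin (n + 1)}
    (hUi : U.carrier (x i) = ⊥) : toPathColim W x 0 (hA.proj hU (x 0) (s 0)) = 0 := by
  rw [← toPathColim_apply_eq_of_mem_pathSections hx (hA.proj_mem_pathSections hU hs) i]
  have h0 : (hA.proj hU (x i) (s i) : W.space (x i)) = 0 :=
    (Submodule.mem_bot k).1 (hUi ▸ (hA.proj hU (x i) (s i)).2)
  rw [h0, map_zero]

theorem IsDecomp.exists_pathColim_coord (hA : IsDecomp k W A) (hU : U ∈ A) {I : Set P}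
    {hI : IsConvexIn I} (e : PersIso k U.toPersMod (constMod k I hI)) (hxI : ∀ i, x i ∈ I) :
    ∃ Φ : ((∀ i, W.space (x i)) ⧸ pathRelations W x) →ₗ[k] k,
      ∀ v, Φ (toPathColim W x 0 v) = e.coord (x 0) (hA.proj hU (x 0) v) := by
  have hcoord : ∀ {y y' : P} (h : y ≤ y'), y' ∈ I →
      e.coord y' ∘ₗ hA.proj hU y' ∘ₗ W.map h = e.coord y ∘ₗ hA.proj hU y := by
    intro y y' h hy'
    ext v
    have hmap : hA.proj hU y' (W.map h v) =
        ⟨W.map h (hA.proj hU y v), U.mapLe h _ (Subtype.prop _)⟩ :=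
      Subtype.ext (hA.proj_map hU h v)
    simp only [LinearMap.comp_apply, hmap, e.coord_map h hy']
  obtain ⟨Φ, hΦ⟩ := exists_pathColim_lift (fun i => e.coord (x i) ∘ₗ hA.proj hU (x i))
    (fun _ h => hcoord h (hxI _)) (fun _ h => hcoord h (hxI _))
  exact ⟨Φ, hΦ 0⟩

def summandsAlong (A : Set (PersSubmod k W)) (x : Fin (n + 1) → P) : Set (PersSubmod k W) :=
  {U | U ∈ A ∧ ∀ i, U.carrier (x i) ≠ ⊥}

/-- The generators of the summands supported on the whole path span the image of the limit in
the colimit, and their coordinates separate them. -/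
theorem encard_summandsAlong_eq_pathRank (hA : IsIntervalDecomp k W A)
    (hx : ∀ i : Fin n, x i.castSucc ≤ x i.succ ∨ x i.succ ≤ x i.castSucc)
    [FiniteDimensional k (W.space (x 0))] :
    (summandsAlong A x).encard = pathRank W x := by
  classical
  set F := summandsAlong A x
  choose I hI he using fun U : F => hA.2 U.1 U.2.1
  set e := fun U : F => (he U).some
  have hxI : ∀ U i, x i ∈ I U := fun U i => (e U).carrier_ne_bot_iff.1 (U.2.2 i)
  set ℓ := toPathColim W x 0 ∘ₗ LinearMap.proj (φ := fun i => W.space (x i)) 0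
  set b := fun U : F => toPathColim W x 0 ((e U).gen (hxI U 0))
  have hspan : (pathSections W x).map ℓ = Submodule.span k (Set.range b) := by
    refine le_antisymm ?_ (Submodule.span_le.2 ?_)
    · rintro _ ⟨t, ht, rfl⟩
      obtain ⟨f, hf, hsum⟩ := (Submodule.mem_iSup_iff_exists_finsupp
        (fun U : A => U.1.carrier (x 0)) (t 0)).1 ((hA.1 (x 0)).2 ▸ Submodule.mem_top)
      change toPathColim W x 0 (t 0) ∈ _
      rw [← hsum, map_finsuppSum]
      refine Submodule.finsuppSum_mem _ _ _ _ fun U _ => ?_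
      by_cases hUF : ∀ i, U.1.carrier (x i) ≠ ⊥
      · set U' : F := ⟨U.1, U.2, hUF⟩
        have hfU := congrArg Subtype.val ((e U').eq_coord_smul_gen (hxI U' 0) ⟨f U, hf U⟩)
        rw [Submodule.coe_smul] at hfU
        rw [show f U = _ from hfU, map_smul]
        exact Submodule.smul_mem _ _ (Submodule.subset_span ⟨U', rfl⟩)
      · push Not at hUF
        obtain ⟨i, hi⟩ := hUF
        have hfU := congrArg Subtype.val (hA.1.proj_finsuppSum f hf U)
        rw [hsum] at hfU
        rw [← show _ = f U from hfU, hA.1.toPathColim_proj_eq_zero U.2 hx ht hi]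
        exact Submodule.zero_mem _
    · rintro _ ⟨U, rfl⟩
      exact ⟨_, (e U).gen_mem_pathSections (hxI U), rfl⟩
  have hli : LinearIndependent k b := by
    rw [linearIndependent_iff']
    intro T c hc U hU
    obtain ⟨Φ, hΦ⟩ := hA.1.exists_pathColim_coord U.2.1 (e U) (hxI U)
    have hΦb : ∀ U', Φ (b U') = if U' = U then 1 else 0 := by
      intro U'
      rw [hΦ]
      split_ifs with hU'
      · subst hU'
        rw [hA.1.proj_apply_of_mem U'.2.1 ((e U').gen (hxI U' 0)).2]
        exact (e U').coord_gen (hxI U' 0)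
      · rw [hA.1.proj_apply_of_mem_of_ne U.2.1 U'.2.1 (fun h => hU' (Subtype.ext h))
          ((e U').gen (hxI U' 0)).2, map_zero]
    simpa [hΦb, hU] using congrArg Φ hc
  have : FiniteDimensional k (Submodule.span k (Set.range b)) := by
    rw [← hspan]
    exact Submodule.finiteDimensional_of_le (LinearMap.map_le_range.trans
      (LinearMap.range_comp_le_range _ _))
  rw [pathRank, hspan, ← hli.enatCard_eq_finrank_span]
  rfl

end Counting

namespace IsZigzagWith

variable {z : ℤ → P} {sq : P → P → Prop}

theorem mem_zigzagSeg (hzz : IsZigzagWith {i : ℤ | 0 ≤ i} z sq) {i N : ℤ} (hi : 0 ≤ i)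
    (hiN : i ≤ N) : z i ∈ zigzagSeg z sq N :=
  ⟨hzz.sq_mono (le_refl (0 : ℤ)) hi hi, hzz.sq_mono hi (hi.trans hiN) hiN⟩

def segPath (hzz : IsZigzagWith {i : ℤ | 0 ≤ i} z sq) {N : ℤ} (n : ℕ) (hn : (n : ℤ) ≤ N) :
    Fin (n + 1) → zigzagSeg z sq N :=
  fun i => ⟨z i, hzz.mem_zigzagSeg (Int.natCast_nonneg _) (by omega)⟩

theorem segPath_le_or_ge (hzz : IsZigzagWith {i : ℤ | 0 ≤ i} z sq) {N : ℤ} {n : ℕ}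
    (hn : (n : ℤ) ≤ N) (i : Fin n) :
    hzz.segPath n hn i.castSucc ≤ hzz.segPath n hn i.succ ∨
      hzz.segPath n hn i.succ ≤ hzz.segPath n hn i.castSucc := by
  have hi : (0 : ℤ) ≤ i := Int.natCast_nonneg _
  exact_mod_cast hzz.le_or_ge_succ hi (by omega : (0 : ℤ) ≤ i + 1)

theorem carrier_segPath_ne_bot (hzz : IsZigzagWith {i : ℤ | 0 ≤ i} z sq) {N : ℤ}
    {W : PersMod.{u, v, w} k (zigzagSeg z sq N)} {U : PersSubmod k W}
    (hU : IsIntervalModule k U.toPersMod) {q p : zigzagSeg z sq N} (hq : q.1 = z 0)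
    (hUq : U.carrier q ≠ ⊥) (hUp : U.carrier p ≠ ⊥) {m : ℕ} (hmN : (m : ℤ) ≤ N)
    (hp : sq (z m) p) (i : Fin (m + 1)) : U.carrier (hzz.segPath m hmN i) ≠ ⊥ := by
  have := hzz.1
  obtain ⟨I, hI, ⟨e⟩⟩ := hU
  have hqi : sq q.1 (z i) :=
    hq ▸ hzz.sq_mono (le_refl (0 : ℤ)) (Int.natCast_nonneg _) (Int.natCast_nonneg _)
  have hip : sq (z i) p := trans_of sq
    (hzz.sq_mono (Int.natCast_nonneg _) (Int.natCast_nonneg _) (by exact_mod_cast i.is_le)) hp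
  exact e.carrier_ne_bot_iff.2 <| hzz.mem_of_sq_between hI (e.carrier_ne_bot_iff.1 hUq)
    (e.carrier_ne_bot_iff.1 hUp) hqi hip

end IsZigzagWith

/-- Existence of a monotonicity threshold: if, for every `n ∈ ℕ`, every summand of
every interval decomposition of `V(n)` is nonzero at `z 0` or at `z n`, then `V` is
monotonic after `z m` for some `m ∈ ℕ`. -/
theorem exists_monotonic_threshold (P : Type v) [PartialOrder P]
    (z : ℤ → P) (sq : P → P → Prop)
    (hzz : IsZigzagWith {i : ℤ | 0 ≤ i} z sq)
    (V : PersMod.{u, v, w} k P) (hfd : ∀ x : P, FiniteDimensional k (V.space x))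
    (hyp : ∀ n : ℤ, 0 ≤ n →
      ∀ A : Set (PersSubmod k (restrictMod k V (zigzagSeg z sq n))),
        IsIntervalDecomp k (restrictMod k V (zigzagSeg z sq n)) A →
        ∀ U ∈ A,
          (∃ p : ↥(zigzagSeg z sq n), p.1 = z 0 ∧ U.carrier p ≠ ⊥) ∨
          (∃ p : ↥(zigzagSeg z sq n), p.1 = z n ∧ U.carrier p ≠ ⊥)) :
    ∃ m : ℤ, 0 ≤ m ∧ MonotonicAfter k z sq V m := by
  set ρ : ℕ → ℕ := fun n => pathRank V fun i : Fin (n + 1) => z i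
  set m := Function.argmin ρ
  refine ⟨m, Int.natCast_nonneg m, fun N hmN A hA U hU hvan p hp => by_contra fun hUp => ?_⟩
  lift N to ℕ using (Int.natCast_nonneg m).trans hmN
  have : ∀ y : zigzagSeg z sq N, FiniteDimensional k ((restrictMod k V _).space y) :=
    fun y => hfd y.1
  have hcount := fun (n : ℕ) (hn : (n : ℤ) ≤ N) =>
    encard_summandsAlong_eq_pathRank hA (hzz.segPath_le_or_ge hn)
  -- `pathRank` of `V(N)` along `segPath n` unfolds to `ρ n`.
  have hsame : summandsAlong A (hzz.segPath N le_rfl) = summandsAlong A (hzz.segPath m hmN) :=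
    (Set.finite_of_encard_eq_coe (hcount N le_rfl)).eq_of_subset_of_encard_le
      (fun U hU => ⟨hU.1, fun i => hU.2 (Fin.castLE (by omega) i)⟩)
      (by rw [hcount, hcount]; exact Nat.cast_le.2 (Function.argmin_le ρ N))
  obtain ⟨q, hq, hUq⟩ := (hyp N (Int.natCast_nonneg N) A hA U hU).resolve_right
    fun ⟨q, hq, hUq⟩ => hUq (hvan q hq)
  have hUm : U ∈ summandsAlong A (hzz.segPath m hmN) :=
    ⟨hU, hzz.carrier_segPath_ne_bot (hA.2 U hU) hq hUq hUp hmN hp⟩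
  exact (hsame ▸ hUm).2 (Fin.last N) (hvan _ rfl)
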